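/- Let G be a block graph of order p and diameter d(G) ≥ 2. Then rn(G) = (p−1)(d(G)+ε(G)) − 2L(G) + ε(G) holds if and only if there exists an ordering u_0, u_1, …, u_{p−1} of the vertices of G such that L(u_0) + L(u_{p−1}) = ε(G) and for all 0 ≤ i < j ≤ p−1: d(u_i,u_j) ≥ Σ_{t=i}^{j−1} [L(u_t) + L(u_{t+1})] − (j−i)(d(G)+ε(G)) + d(G) + 1. -/

import Mathlib

/-!
In a block graph two weight centers at distance at least two would be separated by a cut
vertex `x`; each of them keeps at least half of the vertices on its own side of `x` (otherwise
moving towards `x` would lower the weight), which is impossible. Hence the weight centers form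
a clique, any two central vertices are at distance at most `1 - ε`, and
`d(u, v) + ε ≤ L(u) + L(v) + 1` for all vertices.

List the vertices of a radio labeling by increasing label. Consecutive labels then differ by at
least `d + 1 - d(u_t, u_{t+1}) ≥ d + ε - L(u_t) - L(u_{t+1})`, and summing gives
`span ≥ (p - 1)(d + ε) - 2L(G) + L(u_0) + L(u_{p-1})` with `L(u_0) + L(u_{p-1}) ≥ ε`.
Equality forces every consecutive difference to be minimal, so the labels are the partial sums
of these minimal differences and the radio condition for `u_i, u_j` is exactly the stated
distance condition. Conversely, for an ordering with that condition the partial sums form a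
radio labeling whose span is the lower bound.
-/

open scoped Classical

namespace RadioLabeling

variable {V : Type*} [Fintype V]

/-- The diameter of a graph: maximum distance between two vertices. -/
noncomputable def diam (G : SimpleGraph V) : ℕ :=
  Finset.univ.sup fun p : V × V => G.dist p.1 p.2

/-- A vertex set `S` induces a 2-connected subgraph: the induced subgraph is connected
and contains no cut-vertex. -/
def TwoConn (G : SimpleGraph V) (S : Set V) : Prop :=
  (G.induce S).Connected ∧ ∀ v ∈ S, (S \ {v} : Set V) = ∅ ∨ (G.induce (S \ {v})).Connected

/-- A block: a maximal 2-connected induced subgraph. -/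
def IsBlock (G : SimpleGraph V) (S : Set V) : Prop :=
  TwoConn G S ∧ ∀ T : Set V, S ⊆ T → TwoConn G T → T = S

/-- A block graph: a connected graph each of whose blocks is a clique. -/
def IsBlockGraph (G : SimpleGraph V) : Prop :=
  G.Connected ∧ ∀ S : Set V, IsBlock G S → G.IsClique S

/-- The weight of `G` at `v`: the sum of distances from `v` to all vertices. -/
noncomputable def wt (G : SimpleGraph V) (v : V) : ℕ := ∑ u : V, G.dist u v

/-- The set of weight centers: vertices minimizing the weight. -/
def weightCenters (G : SimpleGraph V) : Set V := {v | ∀ u : V, wt G v ≤ wt G u}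

/-- `nCloser G v u` = number of vertices strictly closer to `v` than to `u`. -/
noncomputable def nCloser (G : SimpleGraph V) (v u : V) : ℕ :=
  (Finset.univ.filter fun z => G.dist v z < G.dist u z).card

/-- A central vertex: either the unique weight center, or (when there are at least two
weight centers) a vertex of the central block, i.e. of a block containing all weight centers. -/
def IsCentral (G : SimpleGraph V) (w : V) : Prop :=
  weightCenters G = {w} ∨
    (2 ≤ (weightCenters G).ncard ∧
      ∃ S : Set V, IsBlock G S ∧ weightCenters G ⊆ S ∧ w ∈ S)

/-- The level of a vertex: its distance to a nearest central vertex. -/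
noncomputable def level (G : SimpleGraph V) (v : V) : ℕ :=
  sInf {n | ∃ w, IsCentral G w ∧ G.dist v w = n}

/-- The total level of `G`. -/
noncomputable def totalLevel (G : SimpleGraph V) : ℕ := ∑ v : V, level G v

/-- `eps G = 1` if `G` has a unique weight center, `0` otherwise. -/
noncomputable def eps (G : SimpleGraph V) : ℕ :=
  if (weightCenters G).ncard = 1 then 1 else 0

/-- A radio labeling: `|f u - f v| ≥ diam G + 1 - dist u v` for all distinct `u`, `v`. -/
def IsRadioLabeling (G : SimpleGraph V) (f : V → ℕ) : Prop :=
  ∀ u v : V, u ≠ v → diam G + 1 ≤ G.dist u v + max (f u - f v) (f v - f u)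

/-- The span of a labeling: the maximum difference of two labels. -/
noncomputable def span (f : V → ℕ) : ℕ :=
  Finset.univ.sup fun p : V × V => f p.1 - f p.2

/-- The radio number: minimum span of a radio labeling. -/
noncomputable def rn (G : SimpleGraph V) : ℕ :=
  sInf {s | ∃ f : V → ℕ, IsRadioLabeling G f ∧ span f = s}

/-- `G` achieves the lower bound `(p-1)(d(G)+ε(G)) - 2L(G) + ε(G)` for the radio number. -/
def lbEq (G : SimpleGraph V) : Prop :=
  (rn G : ℤ) =
    ((Fintype.card V : ℤ) - 1) * ((diam G : ℤ) + (eps G : ℤ)) -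
      2 * (totalLevel G : ℤ) + (eps G : ℤ)

/-- A lower bound block graph: a block graph whose radio number equals the lower bound. -/
def IsLowerBoundBlockGraph (G : SimpleGraph V) : Prop := IsBlockGraph G ∧ lbEq G

/-- `x` lies on a `(u,v)`-geodesic. -/
def OnGeodesic (G : SimpleGraph V) (x u v : V) : Prop :=
  G.dist u v = G.dist u x + G.dist x v

/-- `x` is an ancestor of `v` (and `v` a descendent of `x`): `x` lies on the geodesic
from some central vertex to `v`. -/
def IsAncestor (G : SimpleGraph V) (x v : V) : Prop :=
  ∃ w : V, IsCentral G w ∧ OnGeodesic G x w v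

/-- `phi G u v`: the maximum level of a common ancestor of `u` and `v`. -/
noncomputable def phi (G : SimpleGraph V) (u v : V) : ℕ :=
  sSup {n | ∃ x, IsAncestor G x u ∧ IsAncestor G x v ∧ level G x = n}

/-- `delta G u v = 1` iff the `(u,v)`-geodesic contains two central vertices. -/
noncomputable def delta (G : SimpleGraph V) (u v : V) : ℕ :=
  if ∃ x y : V, x ≠ y ∧ IsCentral G x ∧ IsCentral G y ∧
      OnGeodesic G x u v ∧ OnGeodesic G y u v
    then 1 else 0

/-- `rho G u v = 0` iff the `(u,v)`-geodesic contains a central vertex or a common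
ancestor of `u` and `v`. -/
noncomputable def rho (G : SimpleGraph V) (u v : V) : ℕ :=
  if ∃ x : V, OnGeodesic G x u v ∧
      (IsCentral G x ∨ (IsAncestor G x u ∧ IsAncestor G x v))
    then 0 else 1

/-- The central block: a block containing at least two weight centers, all of them. -/
def IsCentralBlock (G : SimpleGraph V) (D : Set V) : Prop :=
  IsBlock G D ∧ 2 ≤ (weightCenters G).ncard ∧ weightCenters G ⊆ D

/-- `v` belongs to the branch of `G` determined by the non-central block `D` adjacent to the
central vertex `w`: `v` is a vertex of `D` other than `w`, or a descendent of such a vertex. -/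
def InBranch (G : SimpleGraph V) (w : V) (D : Set V) (v : V) : Prop :=
  IsCentral G w ∧ IsBlock G D ∧ w ∈ D ∧ ¬ IsCentralBlock G D ∧
    ∃ u ∈ D, u ≠ w ∧ IsAncestor G u v

/-- Two vertices are in different branches: branches induced by two different blocks
adjacent to the same central vertex. -/
def DifferentBranches (G : SimpleGraph V) (u v : V) : Prop :=
  ∃ w D₁ D₂, D₁ ≠ D₂ ∧ InBranch G w D₁ u ∧ InBranch G w D₂ v

/-- Two vertices are in opposite branches: branches induced by blocks adjacent to two
different central vertices. -/
def OppositeBranches (G : SimpleGraph V) (u v : V) : Prop :=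
  ∃ w₁ w₂ D₁ D₂, w₁ ≠ w₂ ∧ InBranch G w₁ D₁ u ∧ InBranch G w₂ D₂ v

/-- Two vertices lie in the same branch. -/
def SameBranch (G : SimpleGraph V) (u v : V) : Prop :=
  ∃ w D, InBranch G w D u ∧ InBranch G w D v

open SimpleGraph Finset

section BlockGraph

variable {V : Type*} {G : SimpleGraph V}

lemma connected_induce_of_isClique {S : Set V} (hS : G.IsClique S) (hne : S.Nonempty) :
    (G.induce S).Connected := by
  have : Nonempty S := hne.to_subtype
  rw [induce_eq_top.mpr hS]
  exact connected_top

lemma twoConn_of_isClique {S : Set V} (hS : G.IsClique S) (hne : S.Nonempty) : TwoConn G S :=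
  ⟨connected_induce_of_isClique hS hne, fun v _ =>
    (S \ {v}).eq_empty_or_nonempty.imp_right
      (connected_induce_of_isClique (hS.subset Set.sdiff_subset))⟩

lemma exists_isBlock_superset [Finite V] {S : Set V} (hS : TwoConn G S) :
    ∃ B, IsBlock G B ∧ S ⊆ B := by
  obtain ⟨B, hSB, hB⟩ := Finite.exists_le_maximal hS
  exact ⟨B, ⟨hB.prop, fun T hBT hT => hB.eq_of_ge hT hBT⟩, hSB⟩

lemma IsBlockGraph.isBlock_eq_of_mem_of_mem (hG : IsBlockGraph G) {S₁ S₂ : Set V}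
    (hS₁ : IsBlock G S₁) (hS₂ : IsBlock G S₂) {c₁ c₂ : V} (hc : c₁ ≠ c₂)
    (h₁ : c₁ ∈ S₁ ∩ S₂) (h₂ : c₂ ∈ S₁ ∩ S₂) : S₁ = S₂ := by
  have K₁ := hG.2 S₁ hS₁
  have K₂ := hG.2 S₂ hS₂
  have hunion : TwoConn G (S₁ ∪ S₂) := by
    refine ⟨induce_union_connected (connected_induce_of_isClique K₁ ⟨c₁, h₁.1⟩).preconnected
      (connected_induce_of_isClique K₂ ⟨c₁, h₁.2⟩).preconnected ⟨c₁, h₁⟩, fun w _ => Or.inr ?_⟩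
    obtain ⟨c, hcS, hcw⟩ : ∃ c ∈ S₁ ∩ S₂, c ≠ w := by
      rcases eq_or_ne c₁ w with rfl | h
      · exact ⟨c₂, h₂, hc.symm⟩
      · exact ⟨c₁, h₁, h⟩
    rw [Set.union_sdiff_distrib]
    exact induce_union_connected
      (connected_induce_of_isClique (K₁.subset Set.sdiff_subset) ⟨c, hcS.1, hcw⟩).preconnected
      (connected_induce_of_isClique (K₂.subset Set.sdiff_subset) ⟨c, hcS.2, hcw⟩).preconnected
      ⟨c, ⟨hcS.1, hcw⟩, hcS.2, hcw⟩
  have h₁₂ : S₁ ∪ S₂ = S₁ := hS₁.2 _ Set.subset_union_left hunion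
  exact hS₂.2 S₁ (h₁₂ ▸ Set.subset_union_right) hS₁.1

lemma _root_.SimpleGraph.Walk.IsPath.eq_of_mem_takeUntil_of_mem_dropUntil
    {u v x y : V} {p : G.Walk u v} (hp : p.IsPath) (hx : x ∈ p.support)
    (h₁ : y ∈ (p.takeUntil x hx).support) (h₂ : y ∈ (p.dropUntil x hx).support) : y = x := by
  have hnd : ((p.takeUntil x hx).support ++ (p.dropUntil x hx).support.tail).Nodup := by
    rw [← Walk.support_append, p.take_spec hx]
    exact hp.support_nodup
  rw [← (p.dropUntil x hx).cons_tail_support, List.mem_cons] at h₂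
  exact h₂.resolve_right fun h => (List.nodup_append'.mp hnd).2.2 h₁ h

def verticesOnPaths (G : SimpleGraph V) (a b : V) : Set V :=
  {z | ∃ p : G.Walk a b, p.IsPath ∧ z ∈ p.support}

lemma connected_induce_verticesOnPaths {a b : V} (hab : G.Reachable a b) :
    (G.induce (verticesOnPaths G a b)).Connected := by
  obtain ⟨p, hp⟩ := hab.exists_isPath
  have ha : a ∈ verticesOnPaths G a b := ⟨p, hp, p.start_mem_support⟩
  refine (connected_iff_exists_forall_reachable _).mpr ⟨⟨a, ha⟩, ?_⟩
  rintro ⟨z, q, hq, hz⟩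
  exact ((q.takeUntil z hz).induce (verticesOnPaths G a b)
    fun y hy => ⟨q, hq, q.support_takeUntil_subset_support hz hy⟩).reachable

/-- On a path through `z`, the vertex `w ≠ z` cannot lie both before and after `z`. -/
lemma exists_reachable_endpoint_of_mem_verticesOnPaths {a b w z : V}
    (hz : z ∈ verticesOnPaths G a b \ {w}) :
    ∃ y, (y = a ∨ y = b) ∧ ∃ hy : y ∈ verticesOnPaths G a b \ {w},
      (G.induce (verticesOnPaths G a b \ {w})).Reachable ⟨z, hz⟩ ⟨y, hy⟩ := by
  obtain ⟨⟨p, hp, hzp⟩, hzw⟩ := hz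
  have hon : ∀ y ∈ p.support, y ∈ verticesOnPaths G a b := fun y hy => ⟨p, hp, hy⟩
  by_cases hw : w ∈ (p.takeUntil z hzp).support
  · have hwq : w ∉ (p.dropUntil z hzp).support := fun h =>
      hzw (hp.eq_of_mem_takeUntil_of_mem_dropUntil hzp hw h ▸ rfl)
    have hq : ∀ y ∈ (p.dropUntil z hzp).support, y ∈ verticesOnPaths G a b \ {w} :=
      fun y hy => ⟨hon y (p.support_dropUntil_subset_support hzp hy), fun h => hwq (h ▸ hy)⟩
    exact ⟨b, Or.inr rfl, hq b (Walk.end_mem_support _), ⟨(p.dropUntil z hzp).induce _ hq⟩⟩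
  · have hq : ∀ y ∈ (p.takeUntil z hzp).reverse.support, y ∈ verticesOnPaths G a b \ {w} :=
      fun y hy => by
        rw [Walk.support_reverse, List.mem_reverse] at hy
        exact ⟨hon y (p.support_takeUntil_subset_support hzp hy), fun h => hw (h ▸ hy)⟩
    exact ⟨a, Or.inl rfl, hq a (Walk.end_mem_support _),
      ⟨(p.takeUntil z hzp).reverse.induce _ hq⟩⟩

lemma twoConn_verticesOnPaths {a b : V} (hab : a ≠ b) (hreach : G.Reachable a b)
    (havoid : ∀ x, x ≠ a → x ≠ b → ∃ p : G.Walk a b, x ∉ p.support) :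
    TwoConn G (verticesOnPaths G a b) := by
  refine ⟨connected_induce_verticesOnPaths hreach, fun w _ => Or.inr ?_⟩
  set T := verticesOnPaths G a b \ {w}
  have hends : ∀ y₁ y₂, (y₁ = a ∨ y₁ = b) → (y₂ = a ∨ y₂ = b) → ∀ (h₁ : y₁ ∈ T) (h₂ : y₂ ∈ T),
      (G.induce T).Reachable ⟨y₁, h₁⟩ ⟨y₂, h₂⟩ := by
    have hab' : ∀ (ha : a ∈ T) (hb : b ∈ T), (G.induce T).Reachable ⟨a, ha⟩ ⟨b, hb⟩ := by
      intro ha hb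
      obtain ⟨p, hwp⟩ := havoid w (fun h => ha.2 h.symm) (fun h => hb.2 h.symm)
      have hq : ∀ y ∈ p.bypass.support, y ∈ T := fun y hy =>
        ⟨⟨p.bypass, p.bypass_isPath, hy⟩, fun h => hwp (p.support_bypass_subset_support (h ▸ hy))⟩
      exact ⟨p.bypass.induce T hq⟩
    rintro y₁ y₂ (rfl | rfl) (rfl | rfl) h₁ h₂
    · rfl
    · exact hab' h₁ h₂
    · exact (hab' h₂ h₁).symm
    · rfl
  obtain ⟨e, he, heT⟩ : ∃ e, (e = a ∨ e = b) ∧ e ∈ T := by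
    rcases eq_or_ne w a with rfl | hwa
    · exact ⟨b, Or.inr rfl, ⟨hreach.exists_isPath.elim fun p hp => ⟨p, hp, p.end_mem_support⟩,
        hab.symm⟩⟩
    · exact ⟨a, Or.inl rfl, ⟨hreach.exists_isPath.elim fun p hp => ⟨p, hp, p.start_mem_support⟩,
        Ne.symm hwa⟩⟩
  refine (connected_iff_exists_forall_reachable _).mpr ⟨⟨e, heT⟩, fun ⟨z, hz⟩ => ?_⟩
  obtain ⟨y, hy, hyT, hzy⟩ := exists_reachable_endpoint_of_mem_verticesOnPaths hz
  exact (hends e y he hy heT hyT).trans hzy.symm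

lemma IsBlockGraph.exists_mem_support_of_two_le_dist [Finite V] (hG : IsBlockGraph G) {a b : V}
    (h : 2 ≤ G.dist a b) : ∃ x, x ≠ a ∧ x ≠ b ∧ ∀ p : G.Walk a b, x ∈ p.support := by
  have hab : a ≠ b := by rintro rfl; simp at h
  by_contra! havoid
  obtain ⟨B, hB, hsub⟩ :=
    exists_isBlock_superset (twoConn_verticesOnPaths hab (hG.1.preconnected a b) havoid)
  obtain ⟨p, hp⟩ := (hG.1.preconnected a b).exists_isPath
  have hadj := hG.2 B hB (hsub ⟨p, hp, p.start_mem_support⟩) (hsub ⟨p, hp, p.end_mem_support⟩) hab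
  rw [dist_eq_one_iff_adj.mpr hadj] at h
  omega

lemma dist_eq_add_of_forall_mem_support (hc : G.Connected) {u x z : V}
    (h : ∀ p : G.Walk u z, x ∈ p.support) :
    G.dist u z = G.dist u x + G.dist x z := by
  refine le_antisymm hc.dist_triangle ?_
  obtain ⟨p, hp⟩ := (hc.preconnected u z).exists_walk_length_eq_dist
  have hx := h p
  have hlen := congrArg Walk.length (p.take_spec hx)
  rw [Walk.length_append] at hlen
  have := dist_le (p.takeUntil x hx)
  have := dist_le (p.dropUntil x hx)
  omega

end BlockGraph

section WeightCenters

variable {V : Type*} [Fintype V] {G : SimpleGraph V}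

noncomputable def avoidingSide (G : SimpleGraph V) (x u : V) : Finset V :=
  univ.filter fun z => ∃ p : G.Walk u z, x ∉ p.support

lemma notMem_avoidingSide (x u : V) : x ∉ avoidingSide G x u := by
  simp only [avoidingSide, mem_filter, mem_univ, true_and, not_exists, not_not]
  exact fun p => p.end_mem_support

/-- Moving from `u` to `x` brings every vertex outside `avoidingSide G x u` closer by
`d(u, x)` and moves no vertex away by more than that. -/
lemma card_le_two_mul_card_avoidingSide (hc : G.Connected) {u x : V}
    (hu : u ∈ weightCenters G) (hux : u ≠ x) :
    Fintype.card V ≤ 2 * #(avoidingSide G x u) := by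
  set C := avoidingSide G x u
  have hpos : 0 < G.dist u x := hc.pos_dist_of_ne hux
  have hmove : ∀ z, (G.dist z x : ℤ) ≤
      G.dist z u + if z ∈ C then (G.dist u x : ℤ) else -(G.dist u x : ℤ) := by
    intro z
    split_ifs with hz
    · exact_mod_cast hc.dist_triangle
    · have h : ∀ p : G.Walk u z, x ∈ p.support := by
        by_contra! h
        exact hz (mem_filter.mpr ⟨mem_univ z, h⟩)
      have := dist_eq_add_of_forall_mem_support hc h
      rw [dist_comm (u := z), dist_comm (u := z)]
      omega
  have hwt : (wt G x : ℤ) ≤ wt G u + G.dist u x * (#C - #{z | z ∉ C}) := by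
    have := sum_le_sum fun z (_ : z ∈ univ) => hmove z
    rw [sum_add_distrib, sum_ite, sum_const, sum_const] at this
    simp only [nsmul_eq_mul, filter_mem_eq_inter, univ_inter, smul_neg] at this
    simp only [wt, Nat.cast_sum]
    linarith
  have hcard : #C + #{z | z ∉ C} = Fintype.card V := by
    rw [← card_univ, ← card_filter_add_card_filter_not (s := univ) (· ∈ C)]
    simp
  have := hu x
  nlinarith

lemma IsBlockGraph.dist_le_one_of_mem_weightCenters (hG : IsBlockGraph G) {c₁ c₂ : V}
    (h₁ : c₁ ∈ weightCenters G) (h₂ : c₂ ∈ weightCenters G) : G.dist c₁ c₂ ≤ 1 := by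
  by_contra! h
  obtain ⟨x, hx₁, hx₂, hsep⟩ := hG.exists_mem_support_of_two_le_dist h
  have hdisj : Disjoint (avoidingSide G x c₁) (avoidingSide G x c₂) := by
    refine disjoint_left.mpr fun z hz₁ hz₂ => ?_
    obtain ⟨p₁, hp₁⟩ := (mem_filter.mp hz₁).2
    obtain ⟨p₂, hp₂⟩ := (mem_filter.mp hz₂).2
    rcases (Walk.mem_support_append_iff _ _).mp (hsep (p₁.append p₂.reverse)) with h | h
    · exact hp₁ h
    · exact hp₂ (by simpa using h)
  have hx : x ∉ avoidingSide G x c₁ ∪ avoidingSide G x c₂ := by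
    simp only [mem_union, not_or]
    exact ⟨notMem_avoidingSide x c₁, notMem_avoidingSide x c₂⟩
  have hlt := card_lt_univ_of_notMem hx
  rw [card_union_of_disjoint hdisj] at hlt
  have := card_le_two_mul_card_avoidingSide hG.1 h₁ (Ne.symm hx₁)
  have := card_le_two_mul_card_avoidingSide hG.1 h₂ (Ne.symm hx₂)
  omega

lemma IsBlockGraph.isClique_weightCenters (hG : IsBlockGraph G) :
    G.IsClique (weightCenters G) := fun _ h₁ _ h₂ hne =>
  dist_eq_one_iff_adj.mp
    (le_antisymm (hG.dist_le_one_of_mem_weightCenters h₁ h₂) (hG.1.pos_dist_of_ne hne))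

lemma weightCenters_nonempty [Nonempty V] : (weightCenters G).Nonempty := by
  obtain ⟨w, -, hw⟩ := exists_min_image univ (wt G) univ_nonempty
  exact ⟨w, fun u => hw u (mem_univ u)⟩

lemma isCentral_iff_of_weightCenters_eq_singleton {w : V} (h : weightCenters G = {w})
    (x : V) : IsCentral G x ↔ x = w := by
  simp [IsCentral, h, eq_comm]

lemma IsBlockGraph.exists_isCentral (hG : IsBlockGraph G) : ∃ w, IsCentral G w := by
  have : Nonempty V := hG.1.nonempty
  obtain ⟨c, hc⟩ := weightCenters_nonempty (G := G)
  by_cases hW : (weightCenters G).ncard = 1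
  · obtain ⟨w, hw⟩ := Set.ncard_eq_one.mp hW
    exact ⟨w, Or.inl hw⟩
  · have h2 : 2 ≤ (weightCenters G).ncard := by
      have := (Set.ncard_pos (Set.toFinite _)).mpr ⟨c, hc⟩
      omega
    obtain ⟨B, hB, hWB⟩ :=
      exists_isBlock_superset (twoConn_of_isClique hG.isClique_weightCenters ⟨c, hc⟩)
    exact ⟨c, Or.inr ⟨h2, B, hB, hWB, hWB hc⟩⟩

lemma IsBlockGraph.dist_add_eps_le_one (hG : IsBlockGraph G) {w₁ w₂ : V}
    (h₁ : IsCentral G w₁) (h₂ : IsCentral G w₂) : G.dist w₁ w₂ + eps G ≤ 1 := by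
  by_cases hW : (weightCenters G).ncard = 1
  · obtain ⟨w, hw⟩ := Set.ncard_eq_one.mp hW
    rw [(isCentral_iff_of_weightCenters_eq_singleton hw w₁).mp h₁,
      (isCentral_iff_of_weightCenters_eq_singleton hw w₂).mp h₂]
    simp [eps, hW]
  · have hW' : weightCenters G ≠ {w₁} ∧ weightCenters G ≠ {w₂} := by
      constructor <;> rintro h <;> simp [h] at hW
    obtain ⟨h2, S₁, hS₁, hWS₁, hw₁⟩ := h₁.resolve_left hW'.1
    obtain ⟨-, S₂, hS₂, hWS₂, hw₂⟩ := h₂.resolve_left hW'.2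
    obtain ⟨c₁, c₂, hc₁, hc₂, hc⟩ := (Set.one_lt_ncard_iff (Set.toFinite _)).mp h2
    obtain rfl := hG.isBlock_eq_of_mem_of_mem hS₁ hS₂ hc ⟨hWS₁ hc₁, hWS₂ hc₁⟩
      ⟨hWS₁ hc₂, hWS₂ hc₂⟩
    simp only [eps, if_neg hW, add_zero]
    rcases eq_or_ne w₁ w₂ with rfl | hne
    · simp
    · exact (dist_eq_one_iff_adj.mpr (hG.2 S₁ hS₁ hw₁ hw₂ hne)).le

lemma exists_isCentral_dist_eq_level (h : ∃ w, IsCentral G w) (v : V) :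
    ∃ w, IsCentral G w ∧ G.dist v w = level G v := by
  have hne : {n | ∃ w, IsCentral G w ∧ G.dist v w = n}.Nonempty :=
    h.elim fun w hw => ⟨G.dist v w, w, hw, rfl⟩
  exact Nat.sInf_mem hne

/-- Through nearest central vertices: `d(u, v) ≤ L(u) + d(w_u, w_v) + L(v)`. -/
lemma IsBlockGraph.dist_add_eps_le_level_add_level (hG : IsBlockGraph G) (u v : V) :
    G.dist u v + eps G ≤ level G u + level G v + 1 := by
  obtain ⟨wu, hwu, hu⟩ := exists_isCentral_dist_eq_level hG.exists_isCentral u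
  obtain ⟨wv, hwv, hv⟩ := exists_isCentral_dist_eq_level hG.exists_isCentral v
  have := hG.dist_add_eps_le_one hwu hwv
  have := hG.1.dist_triangle (u := u) (v := wu) (w := v)
  have := hG.1.dist_triangle (u := wu) (v := wv) (w := v)
  rw [dist_comm (u := wv)] at this
  omega

lemma IsBlockGraph.eps_le_level_add_level (hG : IsBlockGraph G) {x y : V} (hxy : x ≠ y) :
    eps G ≤ level G x + level G y := by
  have := hG.dist_add_eps_le_level_add_level x y
  have := hG.1.pos_dist_of_ne hxy
  omega

end WeightCenters

section Orderings

variable {V : Type*} [Fintype V]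

def IsVertexOrdering (u : ℕ → V) : Prop :=
  Function.Bijective fun i : Fin (Fintype.card V) => u i

namespace IsVertexOrdering

variable {u : ℕ → V}

lemma exists_eq (hu : IsVertexOrdering u) (v : V) : ∃ i ≤ Fintype.card V - 1, u i = v := by
  obtain ⟨i, hi⟩ := hu.2 v
  exact ⟨i, by omega, hi⟩

lemma ne (hu : IsVertexOrdering u) {i j : ℕ} (hij : i < j) (hj : j ≤ Fintype.card V - 1) :
    u i ≠ u j := by
  have hp : 0 < Fintype.card V := Fintype.card_pos_iff.mpr ⟨u 0⟩
  intro h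
  have := hu.1 (a₁ := ⟨i, by omega⟩) (a₂ := ⟨j, by omega⟩) h
  simp only [Fin.mk.injEq] at this
  omega

lemma sum_range_comp (hu : IsVertexOrdering u) {M : Type*} [AddCommMonoid M] (g : V → M) :
    ∑ t ∈ range (Fintype.card V), g (u t) = ∑ v, g v := by
  rw [← Fin.sum_univ_eq_sum_range (fun t => g (u t))]
  exact hu.sum_comp g

lemma exists_label (hu : IsVertexOrdering u) (g : ℕ → ℤ) (hg : ∀ i ≤ Fintype.card V - 1, 0 ≤ g i) :
    ∃ F : V → ℕ, ∀ i ≤ Fintype.card V - 1, (F (u i) : ℤ) = g i := by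
  have hp : 0 < Fintype.card V := Fintype.card_pos_iff.mpr ⟨u 0⟩
  let e := Equiv.ofBijective _ hu
  refine ⟨fun v => (g (e.symm v)).toNat, fun i hi => ?_⟩
  have : e.symm (u i) = ⟨i, by omega⟩ := e.symm_apply_eq.mpr rfl
  simp only [this]
  exact Int.toNat_of_nonneg (hg i hi)

end IsVertexOrdering

lemma exists_isVertexOrdering_monotone [Nonempty V] (f : V → ℕ) :
    ∃ u : ℕ → V, IsVertexOrdering u ∧
      ∀ i j, i ≤ j → j ≤ Fintype.card V - 1 → f (u i) ≤ f (u j) := by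
  set p := Fintype.card V
  have hp : 0 < p := Fintype.card_pos
  let e : Fin p ≃ V := (Fintype.equivFin V).symm
  let σ := Tuple.sort (f ∘ e)
  let u : ℕ → V := fun i => e (σ ⟨min i (p - 1), by omega⟩)
  have hu : ∀ i : Fin p, u i = (σ.trans e) i := fun i => by
    simp only [u, Equiv.trans_apply, min_eq_left (Nat.le_sub_one_of_lt i.2)]
  refine ⟨u, ?_, fun i j hij hj => ?_⟩
  · simpa only [IsVertexOrdering, hu] using (σ.trans e).bijective
  · exact Tuple.monotone_sort (f ∘ e) (show (⟨min i (p - 1), _⟩ : Fin p) ≤ ⟨min j (p - 1), _⟩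
      by simp only [Fin.mk_le_mk]; omega)

end Orderings

section RadioLabelings

variable {V : Type*} [Fintype V] {G : SimpleGraph V}

lemma dist_le_diam (u v : V) : G.dist u v ≤ diam G :=
  le_sup (f := fun p : V × V => G.dist p.1 p.2) (mem_univ (u, v))

lemma two_le_card_of_two_le_diam (hd : 2 ≤ diam G) : 2 ≤ Fintype.card V := by
  by_contra! h
  have : Subsingleton V := Fintype.card_le_one_iff_subsingleton.mp (by omega)
  have : diam G = 0 := Nat.eq_zero_of_le_zero <| Finset.sup_le fun p _ => by
    simp [Subsingleton.elim p.1 p.2]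
  omega

lemma exists_isRadioLabeling_span_eq_rn (G : SimpleGraph V) :
    ∃ f : V → ℕ, IsRadioLabeling G f ∧ span f = rn G := by
  let e := Fintype.equivFin V
  have hspread : ∀ m n : ℕ, m < n → diam G + 1 ≤ n * (diam G + 1) - m * (diam G + 1) :=
    fun m n h => by
      rw [← Nat.sub_mul]
      exact Nat.le_mul_of_pos_left _ (Nat.sub_pos_of_lt h)
  have hf : IsRadioLabeling G fun v => (e v : ℕ) * (diam G + 1) := by
    intro a b hab
    have hne : (e a : ℕ) ≠ e b := fun h => hab (e.injective (Fin.ext h))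
    refine le_add_left ?_
    rcases lt_or_gt_of_ne hne with h | h
    · exact (hspread _ _ h).trans (le_max_right _ _)
    · exact (hspread _ _ h).trans (le_max_left _ _)
  have hne : {s | ∃ f : V → ℕ, IsRadioLabeling G f ∧ span f = s}.Nonempty := ⟨_, _, hf, rfl⟩
  exact Nat.sInf_mem hne

lemma span_eq_sub_of_le {f : V → ℕ} {a b : V} (ha : ∀ v, f a ≤ f v) (hb : ∀ v, f v ≤ f b) :
    span f = f b - f a :=
  le_antisymm (Finset.sup_le fun p _ => by have := hb p.1; have := ha p.2; omega)
    (le_sup (f := fun p : V × V => f p.1 - f p.2) (mem_univ (b, a)))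

variable {u : ℕ → V} {f : V → ℕ}

lemma span_eq_of_monotone (hu : IsVertexOrdering u)
    (hf : ∀ i j, i ≤ j → j ≤ Fintype.card V - 1 → f (u i) ≤ f (u j)) :
    (span f : ℤ) = f (u (Fintype.card V - 1)) - f (u 0) := by
  have ha : ∀ v, f (u 0) ≤ f v := fun v => by
    obtain ⟨i, hi, rfl⟩ := hu.exists_eq v
    exact hf 0 i (Nat.zero_le i) hi
  have hb : ∀ v, f v ≤ f (u (Fintype.card V - 1)) := fun v => by
    obtain ⟨i, hi, rfl⟩ := hu.exists_eq v
    exact hf i _ hi le_rfl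
  rw [span_eq_sub_of_le ha hb, Nat.cast_sub (ha _)]

lemma isRadioLabeling_iff_of_monotone (hu : IsVertexOrdering u)
    (hf : ∀ i j, i ≤ j → j ≤ Fintype.card V - 1 → f (u i) ≤ f (u j)) :
    IsRadioLabeling G f ↔ ∀ i j, i < j → j ≤ Fintype.card V - 1 →
      (diam G : ℤ) + 1 ≤ G.dist (u i) (u j) + ((f (u j) : ℤ) - f (u i)) := by
  have hmax : ∀ i j, i < j → j ≤ Fintype.card V - 1 →
      max (f (u i) - f (u j)) (f (u j) - f (u i)) = f (u j) - f (u i) := fun i j hij hj => by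
    have := hf i j hij.le hj
    omega
  constructor
  · intro hrad i j hij hj
    have := hrad _ _ (hu.ne hij hj)
    rw [hmax i j hij hj] at this
    have := hf i j hij.le hj
    omega
  · intro hcond a b hab
    obtain ⟨i, hi, rfl⟩ := hu.exists_eq a
    obtain ⟨j, hj, rfl⟩ := hu.exists_eq b
    rcases lt_trichotomy i j with hij | rfl | hij
    · have := hcond i j hij hj
      rw [hmax i j hij hj]
      have := hf i j hij.le hj
      omega
    · exact absurd rfl hab
    · have := hcond j i hij hi
      rw [max_comm, hmax j i hij hi, dist_comm]
      have := hf j i hij.le hi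
      omega

end RadioLabelings

section LowerBound

variable {V : Type*} [Fintype V] {G : SimpleGraph V}

noncomputable def lowerBound (G : SimpleGraph V) : ℤ :=
  ((Fintype.card V : ℤ) - 1) * ((diam G : ℤ) + (eps G : ℤ)) - 2 * (totalLevel G : ℤ) +
    (eps G : ℤ)

/-- The least label difference that the radio condition allows between consecutive vertices
`u t`, `u (t + 1)` of an ordering of a block graph. -/
noncomputable def gap (G : SimpleGraph V) (u : ℕ → V) (t : ℕ) : ℤ :=
  diam G + eps G - level G (u t) - level G (u (t + 1))

lemma sum_gap_Ico (u : ℕ → V) {i j : ℕ} (hij : i ≤ j) :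
    ∑ t ∈ Ico i j, gap G u t = ((j : ℤ) - i) * ((diam G : ℤ) + eps G) -
      ∑ t ∈ Ico i j, ((level G (u t) : ℤ) + level G (u (t + 1))) := by
  have hcard : ((j - i : ℕ) : ℤ) = (j : ℤ) - i := Nat.cast_sub hij
  rw [← hcard, ← Nat.card_Ico, ← nsmul_eq_mul, ← sum_const, ← sum_sub_distrib]
  exact sum_congr rfl fun t _ => by unfold gap; ring

lemma IsVertexOrdering.sum_gap {u : ℕ → V} (hu : IsVertexOrdering u) :
    ∑ t ∈ range (Fintype.card V - 1), gap G u t =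
      lowerBound G + level G (u 0) + level G (u (Fintype.card V - 1)) - eps G := by
  set p := Fintype.card V
  have hp : 0 < p := Fintype.card_pos_iff.mpr ⟨u 0⟩
  have htot : (totalLevel G : ℤ) = ∑ t ∈ range p, (level G (u t) : ℤ) := by
    rw [totalLevel, Nat.cast_sum, hu.sum_range_comp (fun v => (level G v : ℤ))]
  have hsucc := sum_range_succ (fun t => (level G (u t) : ℤ)) (p - 1)
  have hsucc' := sum_range_succ' (fun t => (level G (u t) : ℤ)) (p - 1)
  rw [Nat.sub_add_cancel hp] at hsucc hsucc'
  rw [range_eq_Ico, sum_gap_Ico u (Nat.zero_le _), ← range_eq_Ico, sum_add_distrib, lowerBound,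
    htot, Nat.cast_sub hp]
  push_cast
  linarith

variable {u : ℕ → V} {f : V → ℕ}

lemma IsBlockGraph.gap_le_sub (hG : IsBlockGraph G) (hu : IsVertexOrdering u)
    (hf : ∀ i j, i ≤ j → j ≤ Fintype.card V - 1 → f (u i) ≤ f (u j))
    (hrad : IsRadioLabeling G f) {t : ℕ} (ht : t + 1 ≤ Fintype.card V - 1) :
    gap G u t ≤ (f (u (t + 1)) : ℤ) - f (u t) := by
  have h₁ := (isRadioLabeling_iff_of_monotone hu hf).mp hrad t (t + 1) (Nat.lt_succ_self t) ht
  have h₂ := hG.dist_add_eps_le_level_add_level (u t) (u (t + 1))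
  unfold gap
  omega

lemma IsBlockGraph.sum_gap_le_span (hG : IsBlockGraph G) (hu : IsVertexOrdering u)
    (hf : ∀ i j, i ≤ j → j ≤ Fintype.card V - 1 → f (u i) ≤ f (u j))
    (hrad : IsRadioLabeling G f) :
    ∑ t ∈ range (Fintype.card V - 1), gap G u t ≤ span f := by
  rw [span_eq_of_monotone hu hf, ← sum_range_sub (fun t => (f (u t) : ℤ))]
  exact sum_le_sum fun t ht => hG.gap_le_sub hu hf hrad (by simp at ht; omega)

lemma IsBlockGraph.lowerBound_le_span (hG : IsBlockGraph G) (hp : 2 ≤ Fintype.card V)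
    (hrad : IsRadioLabeling G f) : lowerBound G ≤ span f := by
  have : Nonempty V := hG.1.nonempty
  obtain ⟨u, hu, hf⟩ := exists_isVertexOrdering_monotone f
  have := hG.eps_le_level_add_level (hu.ne (i := 0) (j := Fintype.card V - 1) (by omega) le_rfl)
  have := hG.sum_gap_le_span hu hf hrad
  rw [hu.sum_gap] at this
  omega

lemma IsBlockGraph.lowerBound_le_rn (hG : IsBlockGraph G) (hp : 2 ≤ Fintype.card V) :
    lowerBound G ≤ rn G := by
  obtain ⟨f, hf, hspan⟩ := exists_isRadioLabeling_span_eq_rn G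
  exact hspan ▸ hG.lowerBound_le_span hp hf

lemma IsBlockGraph.exists_ordering_of_span_eq_lowerBound (hG : IsBlockGraph G)
    (hp : 2 ≤ Fintype.card V) (hrad : IsRadioLabeling G f)
    (hspan : (span f : ℤ) = lowerBound G) :
    ∃ u : ℕ → V, IsVertexOrdering u ∧
      level G (u 0) + level G (u (Fintype.card V - 1)) = eps G ∧
      ∀ i j : ℕ, i < j → j ≤ Fintype.card V - 1 →
        (∑ t ∈ Ico i j, ((level G (u t) : ℤ) + (level G (u (t + 1)) : ℤ)))
            - ((j : ℤ) - (i : ℤ)) * ((diam G : ℤ) + (eps G : ℤ)) + (diam G : ℤ) + 1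
          ≤ (G.dist (u i) (u j) : ℤ) := by
  have : Nonempty V := hG.1.nonempty
  obtain ⟨u, hu, hf⟩ := exists_isVertexOrdering_monotone f
  have hends := hG.eps_le_level_add_level
    (hu.ne (i := 0) (j := Fintype.card V - 1) (by omega) le_rfl)
  have hle : ∀ t ∈ range (Fintype.card V - 1), gap G u t ≤ (f (u (t + 1)) : ℤ) - f (u t) :=
    fun t ht => hG.gap_le_sub hu hf hrad (by simp at ht; omega)
  have hsum : ∑ t ∈ range (Fintype.card V - 1), ((f (u (t + 1)) : ℤ) - f (u t)) = span f := by
    rw [sum_range_sub (fun t => (f (u t) : ℤ)), span_eq_of_monotone hu hf]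
  have hgap := hu.sum_gap (G := G)
  have hsum_le := sum_le_sum hle
  have htight : ∀ t ∈ range (Fintype.card V - 1), gap G u t = (f (u (t + 1)) : ℤ) - f (u t) :=
    (sum_eq_sum_iff_of_le hle).mp (by omega)
  refine ⟨u, hu, by omega, fun i j hij hj => ?_⟩
  have hdiff : (f (u j) : ℤ) - f (u i) = ∑ t ∈ Ico i j, gap G u t := by
    rw [← sum_Ico_sub (fun t => (f (u t) : ℤ)) hij.le]
    exact (sum_congr rfl fun t ht => htight t (by simp at ht ⊢; omega)).symm
  have := (isRadioLabeling_iff_of_monotone hu hf).mp hrad i j hij hj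
  rw [hdiff, sum_gap_Ico u hij.le] at this
  linarith

lemma exists_isRadioLabeling_span_eq_lowerBound (hu : IsVertexOrdering u)
    (hends : level G (u 0) + level G (u (Fintype.card V - 1)) = eps G)
    (hcond : ∀ i j : ℕ, i < j → j ≤ Fintype.card V - 1 →
      (∑ t ∈ Ico i j, ((level G (u t) : ℤ) + (level G (u (t + 1)) : ℤ)))
          - ((j : ℤ) - (i : ℤ)) * ((diam G : ℤ) + (eps G : ℤ)) + (diam G : ℤ) + 1
        ≤ (G.dist (u i) (u j) : ℤ)) :
    ∃ F : V → ℕ, IsRadioLabeling G F ∧ (span F : ℤ) = lowerBound G := by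
  let g : ℕ → ℤ := fun n => ∑ t ∈ range n, gap G u t
  have hgap : ∀ t, t + 1 ≤ Fintype.card V - 1 → 1 ≤ gap G u t := fun t ht => by
    have h := hcond t (t + 1) (Nat.lt_succ_self t) ht
    have h' := sum_gap_Ico (G := G) u (Nat.le_succ t)
    simp only [Nat.Ico_succ_singleton, sum_singleton] at h h'
    have := dist_le_diam (G := G) (u t) (u (t + 1))
    push_cast at h h'
    linarith
  have hg : ∀ i j, i ≤ j → g j - g i = ∑ t ∈ Ico i j, gap G u t :=
    fun i j hij => (sum_Ico_eq_sub _ hij).symm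
  have hmono : ∀ i j, i ≤ j → j ≤ Fintype.card V - 1 → g i ≤ g j := fun i j hij hj => by
    have : 0 ≤ ∑ t ∈ Ico i j, gap G u t := sum_nonneg fun t ht => by
      have := hgap t (by simp at ht; omega)
      omega
    linarith [hg i j hij]
  obtain ⟨F, hF⟩ := hu.exists_label g fun i hi => by
    simpa [g] using hmono 0 i (Nat.zero_le i) hi
  have hFmono : ∀ i j, i ≤ j → j ≤ Fintype.card V - 1 → F (u i) ≤ F (u j) := fun i j hij hj => by
    have := hmono i j hij hj
    rw [← hF i (hij.trans hj), ← hF j hj] at this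
    exact_mod_cast this
  refine ⟨F, (isRadioLabeling_iff_of_monotone hu hFmono).mpr fun i j hij hj => ?_, ?_⟩
  · rw [hF i (by omega), hF j hj, hg i j hij.le, sum_gap_Ico u hij.le]
    linarith [hcond i j hij hj]
  · rw [span_eq_of_monotone hu hFmono, hF _ le_rfl, hF 0 (Nat.zero_le _)]
    simp only [g, range_zero, sum_empty, sub_zero, hu.sum_gap]
    omega

end LowerBound

/-- For a block graph `G` of order `p` and diameter at least 2, the radio number
equals the lower bound iff there is an ordering `u_0, …, u_{p-1}` of the vertices with
`L(u_0)+L(u_{p-1}) = ε(G)` and, for all `i < j`,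
`d(u_i,u_j) ≥ Σ_{t=i}^{j-1}[L(u_t)+L(u_{t+1})] - (j-i)(d(G)+ε(G)) + d(G) + 1`. -/
theorem stmt6 {V : Type*} [Fintype V] (G : SimpleGraph V) (hG : IsBlockGraph G)
    (hd : 2 ≤ diam G) :
    lbEq G ↔ ∃ u : ℕ → V,
      Function.Bijective (fun i : Fin (Fintype.card V) => u i) ∧
      (level G (u 0) + level G (u (Fintype.card V - 1)) = eps G) ∧
      (∀ i j : ℕ, i < j → j ≤ Fintype.card V - 1 →
        (∑ t ∈ Finset.Ico i j, ((level G (u t) : ℤ) + (level G (u (t + 1)) : ℤ)))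
            - ((j : ℤ) - (i : ℤ)) * ((diam G : ℤ) + (eps G : ℤ)) + (diam G : ℤ) + 1
          ≤ (G.dist (u i) (u j) : ℤ)) := by
  have hp := two_le_card_of_two_le_diam hd
  constructor
  · intro hlb
    obtain ⟨f, hf, hspan⟩ := exists_isRadioLabeling_span_eq_rn G
    exact hG.exists_ordering_of_span_eq_lowerBound hp hf (by rw [hspan]; exact hlb)
  · rintro ⟨u, hu, hends, hcond⟩
    obtain ⟨F, hF, hspan⟩ := exists_isRadioLabeling_span_eq_lowerBound hu hends hcond
    have hle : rn G ≤ span F := Nat.sInf_le ⟨F, hF, rfl⟩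
    have hle' : (rn G : ℤ) ≤ lowerBound G := hspan ▸ Int.ofNat_le.mpr hle
    exact le_antisymm hle' (hG.lowerBound_le_rn hp)

end RadioLabeling
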